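/- arXiv:2208.14560 — 5 statements merged into one kernel-verified Lean document; each statement's English description precedes it below -/
import Mathlib

section
/- Let π_hh, π_hl, π_lh, π_ll be transition probabilities with π_hh + π_hl = 1, π_lh + π_ll = 1, and persistence π_hh > π_lh. Let Φ be a finite set of signals with positive distributions p_h, p_l on Φ and ℓ(φ) = p_l(φ)/p_h(φ). Suppose V_h, V_l : Φ → ℝ satisfy: (CTM) V_h(φ) > V_l(φ) for all φ, and (CSM) ℓ(φ') ≥ ℓ(φ) implies π_lh V_h(φ') + π_ll V_l(φ') ≤ π_lh V_h(φ) + π_ll V_l(φ). Then Σ_φ p_h(φ)[π_hh V_h(φ) + π_hl V_l(φ)] ≥ Σ_φ p_l(φ)[π_lh V_h(φ) + π_ll V_l(φ)]. -/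
/-- Continuation monotonicity (Lemma 4): under type persistence, CTM and CSM,
a true high-type values the continuation following an announcement of `h`
at least as much as a true low-type does. -/
theorem continuation_monotonicity
    {Φ : Type*} [Fintype Φ] [Nonempty Φ]
    (ph pl : Φ → ℝ)
    (hph : ∀ φ, 0 < ph φ) (hpl : ∀ φ, 0 < pl φ)
    (hs1 : ∑ φ, ph φ = 1) (hs2 : ∑ φ, pl φ = 1)
    (πhh πhl πlh πll : ℝ)
    (hπhh : 0 ≤ πhh) (hπhl : 0 ≤ πhl) (hπlh : 0 ≤ πlh) (hπll : 0 ≤ πll)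
    (hsumh : πhh + πhl = 1) (hsuml : πlh + πll = 1)
    (hpers : πlh < πhh)
    (Vh Vl : Φ → ℝ)
    (hCTM : ∀ φ, Vl φ < Vh φ)
    (hCSM : ∀ φ φ', pl φ / ph φ ≤ pl φ' / ph φ' →
      πlh * Vh φ' + πll * Vl φ' ≤ πlh * Vh φ + πll * Vl φ) :
    ∑ φ, pl φ * (πlh * Vh φ + πll * Vl φ) ≤
      ∑ φ, ph φ * (πhh * Vh φ + πhl * Vl φ) := by
  set W : Φ → ℝ := fun φ => πlh * Vh φ + πll * Vl φ with hW
  set A : ℝ := ∑ φ, ph φ * W φ with hA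
  set B : ℝ := ∑ φ, pl φ * W φ with hB
  -- Step 1 : each pair term of the Chebyshev double sum is nonpositive
  have key : ∀ φ ψ : Φ, (ph φ * pl ψ - pl φ * ph ψ) * (W ψ - W φ) ≤ 0 := by
    intro φ ψ
    rcases le_total (pl φ / ph φ) (pl ψ / ph ψ) with h | h
    · have h1 : W ψ ≤ W φ := hCSM φ ψ h
      have h2 : 0 ≤ ph φ * pl ψ - pl φ * ph ψ := by
        have := (div_le_div_iff₀ (hph φ) (hph ψ)).mp h
        nlinarith
      nlinarith
    · have h1 : W φ ≤ W ψ := hCSM ψ φ h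
      have h2 : ph φ * pl ψ - pl φ * ph ψ ≤ 0 := by
        have := (div_le_div_iff₀ (hph ψ) (hph φ)).mp h
        nlinarith
      nlinarith
  have dsum : ∑ φ, ∑ ψ, (ph φ * pl ψ - pl φ * ph ψ) * (W ψ - W φ) ≤ 0 :=
    Finset.sum_nonpos fun φ _ => Finset.sum_nonpos fun ψ _ => key φ ψ
  -- Step 2 : evaluate the double sum
  have inner : ∀ φ : Φ, ∑ ψ, (ph φ * pl ψ - pl φ * ph ψ) * (W ψ - W φ)
      = ph φ * B + (-(ph φ * W φ)) * (∑ ψ, pl ψ) + (-(pl φ)) * A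
        + (pl φ * W φ) * (∑ ψ, ph ψ) := by
    intro φ
    simp only [hA, hB, Finset.mul_sum, Finset.sum_mul]
    rw [← Finset.sum_add_distrib, ← Finset.sum_add_distrib, ← Finset.sum_add_distrib]
    exact Finset.sum_congr rfl fun ψ _ => by ring
  have expand : ∑ φ, ∑ ψ, (ph φ * pl ψ - pl φ * ph ψ) * (W ψ - W φ) = 2 * (B - A) := by
    calc ∑ φ, ∑ ψ, (ph φ * pl ψ - pl φ * ph ψ) * (W ψ - W φ)
        = ∑ φ, (ph φ * B + (-(ph φ * W φ)) * 1 + (-(pl φ)) * A + (pl φ * W φ) * 1) := by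
          refine Finset.sum_congr rfl fun φ _ => ?_
          rw [inner φ, hs1, hs2]
      _ = (∑ φ, ph φ) * B - A - (∑ φ, pl φ) * A + B := by
          simp only [hA, hB]
          rw [Finset.sum_mul, Finset.sum_mul]
          rw [← Finset.sum_sub_distrib, ← Finset.sum_sub_distrib, ← Finset.sum_add_distrib]
          exact Finset.sum_congr rfl fun φ _ => by ring
      _ = 2 * (B - A) := by rw [hs1, hs2]; ring
  have hBA : B ≤ A := by
    rw [expand] at dsum; linarith
  -- Step 3 : pointwise comparison
  have step3 : A ≤ ∑ φ, ph φ * (πhh * Vh φ + πhl * Vl φ) := by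
    refine Finset.sum_le_sum fun φ _ => ?_
    have h1 : W φ ≤ πhh * Vh φ + πhl * Vl φ := by
      have e1 : πhl = 1 - πhh := by linarith
      have e2 : πll = 1 - πlh := by linarith
      simp only [hW]
      rw [e1, e2]
      nlinarith [mul_nonneg (sub_nonneg.mpr hpers.le) (sub_nonneg.mpr (hCTM φ).le)]
    exact mul_le_mul_of_nonneg_left h1 (hph φ).le
  calc ∑ φ, pl φ * (πlh * Vh φ + πll * Vl φ) = B := rfl
    _ ≤ A := hBA
    _ ≤ _ := step3
end

section
/- Let u : ℝ≥0 → ℝ be three times differentiable, strictly increasing, strictly concave, with nondecreasing absolute risk aversion (r'(c) ≥ 0 where r(c) = −u''(c)/u'(c)). Then the inverse function ψ = u⁻¹ satisfies ψ'''(x) > 0 for all x in the range of u. -/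
/-!
Write `ψ` locally as `u⁻¹`. On the open set `range u`, `d/dx (F ∘ ψ) = (F' / u') ∘ ψ`, so applying
this operator three times to `id` gives `ψ' = (1/u') ∘ ψ`, `ψ'' = (r/u'²) ∘ ψ` (using `u'' = -r u'`)
and `ψ''' = ((r' + 2r²)/u'³) ∘ ψ`. Under IARA `r' ≥ 0`, and `r > 0` by strict concavity.
-/

open Filter Topology

section LeftInverse

variable {u ψ : ℝ → ℝ} (hu : ContDiff ℝ 1 u) (hψ : ∀ c, ψ (u c) = c)
include hu

lemma range_mem_nhds_of_deriv_ne_zero {c : ℝ} (hc : deriv u c ≠ 0) :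
    Set.range u ∈ 𝓝 (u c) := by
  rw [← (hu.contDiffAt.hasStrictDerivAt one_ne_zero).map_nhds_eq hc]
  exact range_mem_map

include hψ

lemma hasDerivAt_comp_leftInverse {F : ℝ → ℝ} {c : ℝ} (hc : deriv u c ≠ 0)
    (hF : DifferentiableAt ℝ F c) :
    HasDerivAt (F ∘ ψ) (deriv F c / deriv u c) (u c) := by
  have hψ' : HasDerivAt ψ (deriv u c)⁻¹ (u c) :=
    ((hu.contDiffAt.hasStrictDerivAt one_ne_zero).to_local_left_inverse hc
      (Eventually.of_forall hψ)).hasDerivAt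
  have hF' : HasDerivAt F (deriv F c) (ψ (u c)) := by rw [hψ]; exact hF.hasDerivAt
  rw [div_eq_mul_inv]
  exact hF'.comp (u c) hψ'

lemma deriv_comp_leftInverse_eventuallyEq {F : ℝ → ℝ} (hu' : ∀ c, deriv u c ≠ 0)
    (hF : Differentiable ℝ F) (c : ℝ) :
    deriv (F ∘ ψ) =ᶠ[𝓝 (u c)] (deriv F / deriv u) ∘ ψ := by
  filter_upwards [range_mem_nhds_of_deriv_ne_zero hu (hu' c)]
  rintro _ ⟨a, rfl⟩
  simp only [(hasDerivAt_comp_leftInverse hu hψ (hu' a) (hF a)).deriv, Function.comp, hψ,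
    Pi.div_apply]

end LeftInverse

section RiskAversion

variable {u r : ℝ → ℝ} (hu' : ∀ c, deriv u c ≠ 0)
  (hr : ∀ c, r c = -(iteratedDeriv 2 u c) / deriv u c)
include hu' hr

lemma deriv_deriv_eq_neg_riskAversion_mul (c : ℝ) : deriv (deriv u) c = -(r c * deriv u c) := by
  rw [hr, div_mul_cancel₀ _ (hu' c), neg_neg, iteratedDeriv_succ, iteratedDeriv_one]

variable (hu : ContDiff ℝ 3 u)
include hu

lemma differentiable_riskAversion : Differentiable ℝ r := by
  rw [show r = fun c => -(iteratedDeriv 2 u c) / deriv u c from funext hr]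
  exact ((hu.differentiable_iteratedDeriv 2 (by norm_num)).neg).div
    (hu.of_le (by norm_num)).differentiable_deriv_two hu'

lemma deriv_inv_deriv_div_deriv : deriv (deriv u)⁻¹ / deriv u = r / deriv u ^ 2 := by
  funext c
  have hd := ((hu.of_le (by norm_num)).differentiable_deriv_two c).hasDerivAt.inv (hu' c)
  rw [Pi.div_apply, hd.deriv, deriv_deriv_eq_neg_riskAversion_mul hu' hr]
  simp only [Pi.div_apply, Pi.pow_apply]
  field_simp [hu' c]

lemma deriv_riskAversion_div_sq_div_deriv :
    deriv (r / deriv u ^ 2) / deriv u = (deriv r + 2 * r ^ 2) / deriv u ^ 3 := by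
  funext c
  have hd := (differentiable_riskAversion hu' hr hu c).hasDerivAt.div
    (((hu.of_le (by norm_num)).differentiable_deriv_two c).hasDerivAt.pow 2)
    (pow_ne_zero 2 (hu' c))
  rw [Pi.div_apply, hd.deriv, deriv_deriv_eq_neg_riskAversion_mul hu' hr]
  simp only [Pi.div_apply, Pi.pow_apply, Pi.add_apply, Pi.mul_apply, Pi.ofNat_apply]
  field_simp [hu' c]
  ring

end RiskAversion

lemma iteratedDeriv_three_leftInverse {u ψ r : ℝ → ℝ} (hu : ContDiff ℝ 3 u)
    (hu' : ∀ c, deriv u c ≠ 0) (hψ : ∀ c, ψ (u c) = c)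
    (hr : ∀ c, r c = -(iteratedDeriv 2 u c) / deriv u c) (c : ℝ) :
    iteratedDeriv 3 ψ (u c) = (deriv r c + 2 * r c ^ 2) / deriv u c ^ 3 := by
  have hu₁ : ContDiff ℝ 1 u := hu.of_le (by norm_num)
  have hdu : Differentiable ℝ (deriv u) := (hu.of_le (by norm_num)).differentiable_deriv_two
  have h₁ : deriv ψ =ᶠ[𝓝 (u c)] (deriv u)⁻¹ ∘ ψ := by
    simpa [deriv_id', ← Pi.one_def, one_div] using
      deriv_comp_leftInverse_eventuallyEq hu₁ hψ hu' differentiable_id c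
  have h₂ : deriv (deriv ψ) =ᶠ[𝓝 (u c)] (r / deriv u ^ 2) ∘ ψ := by
    refine h₁.deriv.trans ?_
    rw [← deriv_inv_deriv_div_deriv hu' hr hu]
    exact deriv_comp_leftInverse_eventuallyEq hu₁ hψ hu' (hdu.inv hu') c
  have h₃ := hasDerivAt_comp_leftInverse hu₁ hψ (hu' c)
    ((differentiable_riskAversion hu' hr hu).div (hdu.pow 2) (fun x => pow_ne_zero 2 (hu' x)) c)
  rw [iteratedDeriv_succ, iteratedDeriv_succ, iteratedDeriv_one, h₂.deriv_eq, h₃.deriv]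
  exact congrFun (deriv_riskAversion_div_sq_div_deriv hu' hr hu) c

/-- Corollary of Lemma 7: a strictly increasing, strictly concave utility with
nondecreasing absolute risk aversion has an inverse `ψ` with `ψ''' > 0` on the
range of `u`. -/
theorem psi_third_derivative_pos_of_IARA
    (u ψ : ℝ → ℝ)
    (hu : ContDiff ℝ 3 u)
    (hu' : ∀ c, 0 < deriv u c)
    (hu'' : ∀ c, iteratedDeriv 2 u c < 0)
    (hψ : ∀ c, ψ (u c) = c)
    (r : ℝ → ℝ)
    (hr : ∀ c, r c = -(iteratedDeriv 2 u c) / deriv u c)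
    (hIARA : ∀ c, 0 ≤ deriv r c)
    (c : ℝ) :
    0 < iteratedDeriv 3 ψ (u c) := by
  rw [iteratedDeriv_three_leftInverse hu (fun c => (hu' c).ne') hψ hr c]
  have hrc : 0 < r c := by rw [hr]; exact div_pos (neg_pos.2 (hu'' c)) (hu' c)
  exact div_pos (add_pos_of_nonneg_of_pos (hIARA c) (by positivity)) (pow_pos (hu' c) 3)
end

section
/- Let χ : D → ℝ be a twice continuously differentiable strictly convex function on an open convex subset D of ℝ², with strictly positive cross partial ∂²χ/∂ν∂Δ > 0 everywhere. If (ν,Δ), (ν',Δ') ∈ D satisfy χ_ν(ν,Δ) ≥ χ_ν(ν',Δ') and χ_Δ(ν,Δ) ≤ χ_Δ(ν',Δ'), then ν ≥ ν' and Δ ≤ Δ'. Moreover, if both hypotheses hold with strict inequalities, then ν > ν' and Δ < Δ'. -/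
/-!
Along the segment from `p` to `q`, the fundamental theorem of calculus writes the change of the
gradient as `∇χ(q) - ∇χ(p) = H (q - p)`, where `H` is the Hessian of `χ` averaged over the
segment. Convexity makes the diagonal entries of `H` nonnegative, supermodularity makes its
off-diagonal entry positive, and strict convexity makes `H (q - p) (q - p) > 0` when `p ≠ q`.
For such a matrix, if `q₁ > p₁` then `H (q - p) e₁ ≤ 0` forces `q₂ ≤ p₂`, and then
`H (q - p) (q - p) = (q₁ - p₁) H (q - p) e₁ + (q₂ - p₂) H (q - p) e₂ ≤ 0`, a contradiction;
the other coordinate is symmetric, and the strict inequalities exclude the boundary cases.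
-/

open Set AffineMap Topology

theorem StrictConvexOn.comp_affineMap_of_injective {𝕜 E F β : Type*} [Ring 𝕜] [PartialOrder 𝕜]
    [AddCommGroup E] [AddCommGroup F] [Module 𝕜 E] [Module 𝕜 F]
    [AddCommMonoid β] [PartialOrder β] [SMul 𝕜 β] {f : F → β} {s : Set F}
    (hf : StrictConvexOn 𝕜 s f) (g : E →ᵃ[𝕜] F) (hg : Function.Injective g) :
    StrictConvexOn 𝕜 (g ⁻¹' s) (f ∘ g) :=
  ⟨hf.1.affine_preimage _, fun _ hx _ hy hxy _ _ ha hb hab => by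
    simpa only [Function.comp_apply, Convex.combo_affine_apply hab] using
      hf.2 hx hy (hg.ne hxy) ha hb hab⟩

section

variable {E : Type*} [NormedAddCommGroup E] [NormedSpace ℝ E] {s : Set E} {f : E → ℝ} {a b : E}

theorem hasDerivAt_comp_lineMap {F : Type*} [NormedAddCommGroup F] [NormedSpace ℝ F]
    {g : E → F} {t : ℝ} (hg : DifferentiableAt ℝ g (lineMap a b t)) :
    HasDerivAt (g ∘ lineMap a b) (fderiv ℝ g (lineMap a b t) (b - a)) t :=
  hg.hasFDerivAt.comp_hasDerivAt t hasDerivAt_lineMap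

theorem Convex.lineMap_mem_of_mem_uIcc (hs : Convex ℝ s) (ha : a ∈ s) (hb : b ∈ s) {t : ℝ}
    (ht : t ∈ uIcc 0 1) : lineMap a b t ∈ s :=
  hs.lineMap_mem ha hb (by rwa [uIcc_of_le zero_le_one] at ht)

theorem ContinuousOn.intervalIntegrable_comp_lineMap {F : Type*} [NormedAddCommGroup F]
    {g : E → F} (hg : ContinuousOn g s) (hs : Convex ℝ s) (ha : a ∈ s) (hb : b ∈ s) :
    IntervalIntegrable (g ∘ AffineMap.lineMap a b) MeasureTheory.volume 0 1 :=
  (hg.comp AffineMap.lineMap_continuous.continuousOn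
    fun _ => hs.lineMap_mem_of_mem_uIcc ha hb).intervalIntegrable

theorem ContDiffOn.sub_eq_integral_fderiv_lineMap {F : Type*} [NormedAddCommGroup F]
    [NormedSpace ℝ F] [CompleteSpace F] {g : E → F}
    (hg : ContDiffOn ℝ 1 g s) (hs : IsOpen s) (hsc : Convex ℝ s) (ha : a ∈ s) (hb : b ∈ s) :
    g b - g a = ∫ t in (0 : ℝ)..1, fderiv ℝ g (AffineMap.lineMap a b t) (b - a) := by
  have hderiv : ∀ t ∈ uIcc (0 : ℝ) 1, HasDerivAt (g ∘ AffineMap.lineMap a b)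
      (fderiv ℝ g (AffineMap.lineMap a b t) (b - a)) t := fun t ht =>
    hasDerivAt_comp_lineMap <| (hg.differentiableOn one_ne_zero).differentiableAt <|
      hs.mem_nhds <| hsc.lineMap_mem_of_mem_uIcc ha hb ht
  have hint := ((hg.continuousOn_fderiv_of_isOpen hs le_rfl).clm_apply
    (continuousOn_const (c := b - a))).intervalIntegrable_comp_lineMap hsc ha hb
  simpa using (intervalIntegral.integral_eq_sub_of_hasDerivAt hderiv hint).symm

theorem StrictConvexOn.fderiv_apply_sub_lt (hf : StrictConvexOn ℝ s f)
    (ha : a ∈ s) (hb : b ∈ s) (hab : a ≠ b)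
    (hfa : DifferentiableAt ℝ f a) (hfb : DifferentiableAt ℝ f b) :
    fderiv ℝ f a (b - a) < fderiv ℝ f b (b - a) := by
  have hg := hf.comp_affineMap_of_injective (lineMap a b) (lineMap_injective ℝ hab)
  have h0 := hasDerivAt_comp_lineMap (b := b) (t := 0) (by simpa using hfa)
  have h1 := hasDerivAt_comp_lineMap (a := a) (t := 1) (by simpa using hfb)
  simp only [lineMap_apply_zero, lineMap_apply_one] at h0 h1
  exact (hg.lt_slope_of_hasDerivAt (by simpa) (by simpa) zero_lt_one h0).trans
    (hg.slope_lt_of_hasDerivAt (by simpa) (by simpa) zero_lt_one h1)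

theorem ConvexOn.fderiv_fderiv_apply_self_nonneg (hf : ConvexOn ℝ s f) (hs : IsOpen s)
    (hfd : DifferentiableOn ℝ f s) {x : E} (hx : x ∈ s)
    (hf' : DifferentiableAt ℝ (fderiv ℝ f) x) (v : E) :
    0 ≤ fderiv ℝ (fderiv ℝ f) x v v := by
  set S := (lineMap x (x + v) : ℝ → E) ⁻¹' s
  have hS : S ∈ 𝓝 0 := (hs.preimage lineMap_continuous).mem_nhds (by simpa [S])
  have hmono : MonotoneOn (fun t : ℝ => fderiv ℝ f (lineMap x (x + v) t) v) S := by
    refine ((hf.comp_affineMap (lineMap x (x + v))).monotoneOn_deriv fun t ht =>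
      (hasDerivAt_comp_lineMap (hfd.differentiableAt (hs.mem_nhds ht))).differentiableAt).congr
      fun t ht => ?_
    simpa using (hasDerivAt_comp_lineMap (hfd.differentiableAt (hs.mem_nhds ht))).deriv
  have hderiv : HasDerivAt (fun t : ℝ => fderiv ℝ f (lineMap x (x + v) t) v)
      (fderiv ℝ (fderiv ℝ f) x v v) 0 := by
    simpa [Function.comp_def] using (hf'.hasFDerivAt.clm_apply (hasFDerivAt_const v x)
      ).comp_hasDerivAt_of_eq (0 : ℝ) (hasDerivAt_lineMap (a := x) (b := x + v)) (by simp)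
  exact HasDerivWithinAt.nonneg_of_monotoneOn
    (by simpa using (PerfectSpace.univ_preperfect (0 : ℝ) (mem_univ _)).nhds_inter hS)
    hderiv.hasDerivWithinAt hmono

theorem fderiv_fderiv_apply_const {x : E} (hf : DifferentiableAt ℝ (fderiv ℝ f) x) (v w : E) :
    fderiv ℝ (fun y => fderiv ℝ f y v) x w = fderiv ℝ (fderiv ℝ f) x w v := by
  simp [fderiv_clm_apply hf (differentiableAt_const v)]

theorem ContDiffOn.differentiableAt_fderiv (hf : ContDiffOn ℝ 2 f s) (hs : IsOpen s) {x : E}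
    (hx : x ∈ s) : DifferentiableAt ℝ (fderiv ℝ f) x :=
  ((hf.fderiv_of_isOpen hs (by norm_num)).differentiableOn one_ne_zero).differentiableAt
    (hs.mem_nhds hx)

noncomputable def averagedHessian (f : E → ℝ) (a b : E) : E →L[ℝ] E →L[ℝ] ℝ :=
  ∫ t in (0 : ℝ)..1, fderiv ℝ (fderiv ℝ f) (lineMap a b t)

theorem ContDiffOn.continuousOn_fderiv_fderiv (hf : ContDiffOn ℝ 2 f s) (hs : IsOpen s) :
    ContinuousOn (fderiv ℝ (fderiv ℝ f)) s :=
  (hf.fderiv_of_isOpen hs (by norm_num)).continuousOn_fderiv_of_isOpen hs le_rfl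

theorem ContDiffOn.fderiv_sub_fderiv_eq_averagedHessian (hf : ContDiffOn ℝ 2 f s)
    (hs : IsOpen s) (hsc : Convex ℝ s) (ha : a ∈ s) (hb : b ∈ s) :
    fderiv ℝ f b - fderiv ℝ f a = averagedHessian f a b (b - a) := by
  rw [(hf.fderiv_of_isOpen hs (by norm_num)).sub_eq_integral_fderiv_lineMap hs hsc ha hb,
    averagedHessian, ContinuousLinearMap.intervalIntegral_apply
      ((hf.continuousOn_fderiv_fderiv hs).intervalIntegrable_comp_lineMap hsc ha hb)]

theorem ContDiffOn.averagedHessian_apply_apply (hf : ContDiffOn ℝ 2 f s)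
    (hs : IsOpen s) (hsc : Convex ℝ s) (ha : a ∈ s) (hb : b ∈ s) (v w : E) :
    averagedHessian f a b v w =
      ∫ t in (0 : ℝ)..1, fderiv ℝ (fderiv ℝ f) (AffineMap.lineMap a b t) v w := by
  have hH := hf.continuousOn_fderiv_fderiv hs
  have hint : IntervalIntegrable
      (fun t => fderiv ℝ (fderiv ℝ f) (AffineMap.lineMap a b t) v) MeasureTheory.volume 0 1 :=
    (hH.clm_apply continuousOn_const).intervalIntegrable_comp_lineMap hsc ha hb
  rw [averagedHessian, ContinuousLinearMap.intervalIntegral_apply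
      (hH.intervalIntegrable_comp_lineMap hsc ha hb),
    ContinuousLinearMap.intervalIntegral_apply hint]

theorem ContDiffOn.averagedHessian_comm (hf : ContDiffOn ℝ 2 f s)
    (hs : IsOpen s) (hsc : Convex ℝ s) (ha : a ∈ s) (hb : b ∈ s) (v w : E) :
    averagedHessian f a b v w = averagedHessian f a b w v := by
  rw [hf.averagedHessian_apply_apply hs hsc ha hb, hf.averagedHessian_apply_apply hs hsc ha hb]
  refine intervalIntegral.integral_congr fun t ht => ?_
  exact ((hf.contDiffAt (hs.mem_nhds (hsc.lineMap_mem_of_mem_uIcc ha hb ht))).isSymmSndFDerivAt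
    (by simp [minSmoothness_of_isRCLikeNormedField])) v w

theorem ContDiffOn.averagedHessian_pos (hf : ContDiffOn ℝ 2 f s)
    (hs : IsOpen s) (hsc : Convex ℝ s) (ha : a ∈ s) (hb : b ∈ s) {v w : E}
    (hpos : ∀ x ∈ s, 0 < fderiv ℝ (fderiv ℝ f) x v w) : 0 < averagedHessian f a b v w := by
  have hint : IntervalIntegrable
      (fun t => fderiv ℝ (fderiv ℝ f) (AffineMap.lineMap a b t) v w) MeasureTheory.volume 0 1 :=
    (((hf.continuousOn_fderiv_fderiv hs).clm_apply continuousOn_const).clm_apply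
      continuousOn_const).intervalIntegrable_comp_lineMap hsc ha hb
  rw [hf.averagedHessian_apply_apply hs hsc ha hb]
  exact intervalIntegral.intervalIntegral_pos_of_pos_on hint
    (fun t ht => hpos _ (hsc.lineMap_mem ha hb (Ioo_subset_Icc_self ht))) zero_lt_one

theorem ConvexOn.averagedHessian_apply_self_nonneg (hconv : ConvexOn ℝ s f)
    (hf : ContDiffOn ℝ 2 f s) (hs : IsOpen s) (ha : a ∈ s) (hb : b ∈ s) (v : E) :
    0 ≤ averagedHessian f a b v v := by
  rw [hf.averagedHessian_apply_apply hs hconv.1 ha hb]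
  refine intervalIntegral.integral_nonneg zero_le_one fun t ht => ?_
  have hx := hconv.1.lineMap_mem ha hb ht
  exact hconv.fderiv_fderiv_apply_self_nonneg hs (hf.differentiableOn two_ne_zero) hx
    (hf.differentiableAt_fderiv hs hx) v

theorem StrictConvexOn.averagedHessian_apply_self_pos (hconv : StrictConvexOn ℝ s f)
    (hf : ContDiffOn ℝ 2 f s) (hs : IsOpen s) (ha : a ∈ s) (hb : b ∈ s) (hab : a ≠ b) :
    0 < averagedHessian f a b (b - a) (b - a) := by
  have hdiff := hf.differentiableOn two_ne_zero
  rw [← hf.fderiv_sub_fderiv_eq_averagedHessian hs hconv.1 ha hb, sub_apply, sub_pos]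
  exact hconv.fderiv_apply_sub_lt ha hb hab (hdiff.differentiableAt (hs.mem_nhds ha))
    (hdiff.differentiableAt (hs.mem_nhds hb))

end

theorem ContinuousLinearMap.apply_eq_fst_smul_add_snd_smul {R M : Type*} [Semiring R]
    [TopologicalSpace R] [AddCommMonoid M] [Module R M] [TopologicalSpace M]
    (L : R × R →L[R] M) (u : R × R) : L u = u.1 • L (1, 0) + u.2 • L (0, 1) := by
  rw [← map_smul, ← map_smul, ← map_add]
  simp

theorem fst_nonpos_and_snd_nonneg_of_form (H : ℝ × ℝ →L[ℝ] ℝ × ℝ →L[ℝ] ℝ) {u : ℝ × ℝ}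
    (h₁₁ : 0 ≤ H (1, 0) (1, 0)) (h₂₂ : 0 ≤ H (0, 1) (0, 1)) (h₂₁ : 0 < H (0, 1) (1, 0))
    (hsymm : H (1, 0) (0, 1) = H (0, 1) (1, 0)) (hu : u ≠ 0 → 0 < H u u)
    (h₁ : H u (1, 0) ≤ 0) (h₂ : 0 ≤ H u (0, 1)) : u.1 ≤ 0 ∧ 0 ≤ u.2 := by
  have hA : H u (1, 0) = u.1 * H (1, 0) (1, 0) + u.2 * H (0, 1) (1, 0) := by
    simp [H.apply_eq_fst_smul_add_snd_smul u]
  have hB : H u (0, 1) = u.1 * H (0, 1) (1, 0) + u.2 * H (0, 1) (0, 1) := by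
    simp [H.apply_eq_fst_smul_add_snd_smul u, hsymm]
  have hQ : H u u = u.1 * H u (1, 0) + u.2 * H u (0, 1) := by
    simpa using (H u).apply_eq_fst_smul_add_snd_smul u
  constructor
  · by_contra! h
    have hu₂ : u.2 ≤ 0 := by nlinarith [mul_nonneg h.le h₁₁]
    have := hu fun h0 => by simp [h0] at h
    nlinarith [mul_nonpos_of_nonneg_of_nonpos h.le h₁, mul_nonpos_of_nonpos_of_nonneg hu₂ h₂]
  · by_contra! h
    have hu₁ : 0 ≤ u.1 := by nlinarith [mul_nonpos_of_nonpos_of_nonneg h.le h₂₂]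
    have := hu fun h0 => by simp [h0] at h
    nlinarith [mul_nonpos_of_nonneg_of_nonpos hu₁ h₁, mul_nonpos_of_nonpos_of_nonneg h.le h₂]

theorem fst_neg_and_snd_pos_of_form (H : ℝ × ℝ →L[ℝ] ℝ × ℝ →L[ℝ] ℝ) {u : ℝ × ℝ}
    (h₁₁ : 0 ≤ H (1, 0) (1, 0)) (h₂₂ : 0 ≤ H (0, 1) (0, 1)) (h₂₁ : 0 < H (0, 1) (1, 0))
    (hsymm : H (1, 0) (0, 1) = H (0, 1) (1, 0)) (hu : u ≠ 0 → 0 < H u u)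
    (h₁ : H u (1, 0) < 0) (h₂ : 0 < H u (0, 1)) : u.1 < 0 ∧ 0 < u.2 := by
  obtain ⟨hu₁, hu₂⟩ := fst_nonpos_and_snd_nonneg_of_form H h₁₁ h₂₂ h₂₁ hsymm hu h₁.le h₂.le
  have hA : H u (1, 0) = u.1 * H (1, 0) (1, 0) + u.2 * H (0, 1) (1, 0) := by
    simp [H.apply_eq_fst_smul_add_snd_smul u]
  have hB : H u (0, 1) = u.1 * H (0, 1) (1, 0) + u.2 * H (0, 1) (0, 1) := by
    simp [H.apply_eq_fst_smul_add_snd_smul u, hsymm]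
  constructor
  · refine hu₁.lt_of_ne fun h => ?_
    nlinarith
  · refine hu₂.lt_of_ne' fun h => ?_
    nlinarith

/-- Lemma A.4 (single-crossing for the auxiliary cost function): for a C²
strictly convex supermodular function `χ` on an open convex `D ⊆ ℝ²`, ordering
of the partial derivatives implies ordering of the arguments, strictly so
whenever the derivative comparisons are strict. -/
theorem single_crossing_chi
    (D : Set (ℝ × ℝ)) (hD : IsOpen D) (hDc : Convex ℝ D)
    (χ : ℝ × ℝ → ℝ) (hχ : ContDiffOn ℝ 2 χ D)
    (hconv : StrictConvexOn ℝ D χ)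
    (hcross : ∀ p ∈ D, 0 < fderiv ℝ (fun q => fderiv ℝ χ q (1, 0)) p (0, 1))
    (p q : ℝ × ℝ) (hp : p ∈ D) (hq : q ∈ D) :
    ((fderiv ℝ χ q (1, 0) ≤ fderiv ℝ χ p (1, 0) ∧
        fderiv ℝ χ p (0, 1) ≤ fderiv ℝ χ q (0, 1)) →
      (q.1 ≤ p.1 ∧ p.2 ≤ q.2)) ∧
    ((fderiv ℝ χ q (1, 0) < fderiv ℝ χ p (1, 0) ∧
        fderiv ℝ χ p (0, 1) < fderiv ℝ χ q (0, 1)) →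
      (q.1 < p.1 ∧ p.2 < q.2)) := by
  set H := averagedHessian χ p q
  have hgrad (w : ℝ × ℝ) : H (q - p) w = fderiv ℝ χ q w - fderiv ℝ χ p w := by
    rw [← hχ.fderiv_sub_fderiv_eq_averagedHessian hD hDc hp hq, sub_apply]
  have hdiag := hconv.convexOn.averagedHessian_apply_self_nonneg hχ hD hp hq
  have hsymm := hχ.averagedHessian_comm hD hDc hp hq (1, 0) (0, 1)
  have hmixed : 0 < H (0, 1) (1, 0) := hχ.averagedHessian_pos hD hDc hp hq fun x hx => by
    simpa [fderiv_fderiv_apply_const (hχ.differentiableAt_fderiv hD hx)] using hcross x hx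
  have hpos (hu : q - p ≠ 0) : 0 < H (q - p) (q - p) :=
    hconv.averagedHessian_apply_self_pos hχ hD hp hq (sub_ne_zero.1 hu).symm
  refine ⟨fun ⟨h₁, h₂⟩ => ?_, fun ⟨h₁, h₂⟩ => ?_⟩
  · simpa using fst_nonpos_and_snd_nonneg_of_form H (hdiag _) (hdiag _) hmixed hsymm hpos
      (by linarith [hgrad (1, 0)]) (by linarith [hgrad (0, 1)])
  · simpa using fst_neg_and_snd_pos_of_form H (hdiag _) (hdiag _) hmixed hsymm hpos
      (by linarith [hgrad (1, 0)]) (by linarith [hgrad (0, 1)])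
end

section
/- In the setting of the auxiliary cost minimization problem: let x : Y → I be an interior solution with multipliers λ, μ satisfying ψ'(x(y)) = λ − μℓ(y), where ψ' is strictly increasing. Order Y so that ℓ is increasing. Then: if μ > 0, x is strictly decreasing in ℓ and the distortion Δ = Σ_y (p_h(y) − p_l(y)) x(y) is strictly positive; if μ < 0, x is strictly increasing in ℓ and Δ < 0; if μ = 0, x is constant and Δ = 0. Hence sign(∂χ/∂Δ) = sign(μ) = sign(Δ). -/
lemma key_sum {Y : Type*} [Fintype Y] (ph pl x : Y → ℝ)
    (hs1 : ∑ y, ph y = 1) (hs2 : ∑ y, pl y = 1) :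
    ∑ y, ∑ z, (x y - x z) * (ph y * pl z - pl y * ph z)
      = 2 * ∑ y, (ph y - pl y) * x y := by
  have inner : ∀ y : Y, ∑ z, (x y - x z) * (ph y * pl z - pl y * ph z)
      = x y * ph y - x y * pl y - ph y * (∑ z, pl z * x z) + pl y * (∑ z, ph z * x z) := by
    intro y
    have h1 : ∀ z : Y, (x y - x z) * (ph y * pl z - pl y * ph z)
        = x y * ph y * pl z - x y * pl y * ph z - ph y * (pl z * x z) + pl y * (ph z * x z) := by
      intro z; ring
    rw [Finset.sum_congr rfl (fun z _ => h1 z)]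
    rw [Finset.sum_add_distrib, Finset.sum_sub_distrib, Finset.sum_sub_distrib,
      ← Finset.mul_sum, ← Finset.mul_sum, ← Finset.mul_sum, ← Finset.mul_sum, hs1, hs2]
    ring
  rw [Finset.sum_congr rfl (fun y _ => inner y)]
  rw [Finset.sum_add_distrib, Finset.sum_sub_distrib, Finset.sum_sub_distrib,
    ← Finset.sum_mul, ← Finset.sum_mul, hs1, hs2]
  simp only [one_mul]
  have ca : ∑ y, x y * ph y = ∑ y, ph y * x y := Finset.sum_congr rfl (fun y _ => mul_comm _ _)
  have cb : ∑ y, x y * pl y = ∑ y, pl y * x y := Finset.sum_congr rfl (fun y _ => mul_comm _ _)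
  have c3 : ∑ y, (ph y - pl y) * x y = (∑ y, ph y * x y) - ∑ y, pl y * x y := by
    rw [← Finset.sum_sub_distrib]
    exact Finset.sum_congr rfl (fun y _ => by ring)
  rw [ca, cb, c3]; ring

/-- Lemma A.3 item (iv): sign of the distortion. At an interior solution with
first-order condition `ψ'(x y) = λ - μ ℓ(y)` (with `ψ'` strictly increasing on
`I` and `ℓ` nonconstant), the sign of `μ` determines the monotonicity of `x`
in the likelihood ratio and the sign of the distortion
`Δ = Σ (p_h - p_l) x`. -/
theorem distortion_sign
    {Y : Type*} [Fintype Y] [Nonempty Y]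
    (ph pl : Y → ℝ)
    (hph : ∀ y, 0 < ph y) (hpl : ∀ y, 0 < pl y)
    (hs1 : ∑ y, ph y = 1) (hs2 : ∑ y, pl y = 1)
    (hnc : ∃ y y' : Y, pl y / ph y ≠ pl y' / ph y')
    (I : Set ℝ) (dψ : ℝ → ℝ)
    (hdψ : StrictMonoOn dψ I)
    (x : Y → ℝ) (hxI : ∀ y, x y ∈ I)
    (lam mu : ℝ)
    (hfoc : ∀ y, dψ (x y) = lam - mu * (pl y / ph y)) :
    (0 < mu →
      (∀ y y', pl y / ph y < pl y' / ph y' → x y' < x y) ∧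
      0 < ∑ y, (ph y - pl y) * x y) ∧
    (mu < 0 →
      (∀ y y', pl y / ph y < pl y' / ph y' → x y < x y') ∧
      (∑ y, (ph y - pl y) * x y) < 0) ∧
    (mu = 0 →
      (∀ y y', x y = x y') ∧ (∑ y, (ph y - pl y) * x y) = 0) := by
  set ℓ : Y → ℝ := fun y => pl y / ph y with hℓ
  -- equal likelihood ratios give equal x
  have heq : ∀ y z, ℓ y = ℓ z → x y = x z := by
    intro y z h
    apply hdψ.injOn (hxI y) (hxI z)
    have h' : pl y / ph y = pl z / ph z := h
    rw [hfoc y, hfoc z, h']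
  -- factor sign
  have hfac : ∀ y z, ℓ y < ℓ z → 0 < ph y * pl z - pl y * ph z := by
    intro y z h
    rw [hℓ, div_lt_div_iff₀ (hph y) (hph z)] at h
    nlinarith
  -- monotonicity under μ > 0
  have hmonoP : 0 < mu → ∀ y z, ℓ y < ℓ z → x z < x y := by
    intro hmu y z h
    have : dψ (x z) < dψ (x y) := by
      rw [hfoc y, hfoc z]; nlinarith
    exact (hdψ.lt_iff_lt (hxI z) (hxI y)).mp this
  have hmonoN : mu < 0 → ∀ y z, ℓ y < ℓ z → x y < x z := by
    intro hmu y z h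
    have : dψ (x y) < dψ (x z) := by
      rw [hfoc y, hfoc z]; nlinarith
    exact (hdψ.lt_iff_lt (hxI y) (hxI z)).mp this
  -- term of the double sum
  set T : Y → Y → ℝ := fun y z => (x y - x z) * (ph y * pl z - pl y * ph z) with hT
  have hkey : ∑ y, ∑ z, T y z = 2 * ∑ y, (ph y - pl y) * x y :=
    key_sum ph pl x hs1 hs2
  obtain ⟨y0, y0', hy0⟩ := hnc
  refine ⟨?_, ?_, ?_⟩
  · -- μ > 0
    intro hmu
    refine ⟨fun y y' h => hmonoP hmu y y' h, ?_⟩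
    have hnn : ∀ y z, 0 ≤ T y z := by
      intro y z
      rcases lt_trichotomy (ℓ y) (ℓ z) with h | h | h
      · exact le_of_lt (mul_pos (by nlinarith [hmonoP hmu y z h, hfac y z h])
          (hfac y z h))
      · simp [hT, heq y z h]
      · have h1 := hmonoP hmu z y h
        have h2 := hfac z y h
        show 0 ≤ (x y - x z) * (ph y * pl z - pl y * ph z)
        nlinarith
    have hpos : ∀ y z, ℓ y ≠ ℓ z → 0 < T y z := by
      intro y z h
      rcases lt_or_gt_of_ne h with h | h
      · exact mul_pos (by nlinarith [hmonoP hmu y z h]) (hfac y z h)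
      · have h1 := hmonoP hmu z y h
        have h2 := hfac z y h
        show 0 < (x y - x z) * (ph y * pl z - pl y * ph z)
        nlinarith [mul_pos (sub_pos.mpr h1) h2]
    have hS : 0 < ∑ y, ∑ z, T y z := by
      apply Finset.sum_pos' (fun y _ => Finset.sum_nonneg (fun z _ => hnn y z))
      exact ⟨y0, Finset.mem_univ _,
        Finset.sum_pos' (fun z _ => hnn y0 z)
          ⟨y0', Finset.mem_univ _, hpos y0 y0' hy0⟩⟩
    linarith [hkey ▸ hS]
  · -- μ < 0
    intro hmu
    refine ⟨fun y y' h => hmonoN hmu y y' h, ?_⟩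
    have hnn : ∀ y z, 0 ≤ -T y z := by
      intro y z
      rcases lt_trichotomy (ℓ y) (ℓ z) with h | h | h
      · have h1 := hmonoN hmu y z h
        have h2 := hfac y z h
        show 0 ≤ -((x y - x z) * (ph y * pl z - pl y * ph z))
        nlinarith [mul_pos (sub_pos.mpr h1) h2]
      · simp [hT, heq y z h]
      · have h1 := hmonoN hmu z y h
        have h2 := hfac z y h
        show 0 ≤ -((x y - x z) * (ph y * pl z - pl y * ph z))
        nlinarith [mul_pos (sub_pos.mpr h1) h2]
    have hpos : ∀ y z, ℓ y ≠ ℓ z → 0 < -T y z := by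
      intro y z h
      rcases lt_or_gt_of_ne h with h | h
      · have h1 := hmonoN hmu y z h
        have h2 := hfac y z h
        show 0 < -((x y - x z) * (ph y * pl z - pl y * ph z))
        nlinarith [mul_pos (sub_pos.mpr h1) h2]
      · have h1 := hmonoN hmu z y h
        have h2 := hfac z y h
        show 0 < -((x y - x z) * (ph y * pl z - pl y * ph z))
        nlinarith [mul_pos (sub_pos.mpr h1) h2]
    have hS : 0 < ∑ y, ∑ z, -T y z := by
      apply Finset.sum_pos' (fun y _ => Finset.sum_nonneg (fun z _ => hnn y z))
      exact ⟨y0, Finset.mem_univ _,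
        Finset.sum_pos' (fun z _ => hnn y0 z)
          ⟨y0', Finset.mem_univ _, hpos y0 y0' hy0⟩⟩
    have hneg : ∑ y, ∑ z, -T y z = -(∑ y, ∑ z, T y z) := by
      simp [Finset.sum_neg_distrib]
    rw [hneg] at hS
    linarith [hkey ▸ hS]
  · -- μ = 0
    intro hmu
    have hc : ∀ y y', x y = x y' := by
      intro y y'
      apply hdψ.injOn (hxI y) (hxI y')
      rw [hfoc y, hfoc y', hmu]; ring
    refine ⟨hc, ?_⟩
    obtain ⟨c⟩ := (inferInstance : Nonempty Y)
    have : ∑ y, (ph y - pl y) * x y = ∑ y, (ph y - pl y) * x c :=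
      Finset.sum_congr rfl (fun y _ => by rw [hc y c])
    rw [this, ← Finset.sum_mul, Finset.sum_sub_distrib, hs1, hs2]
    ring
end

section
/- (Quadratic-cost martingale rewards) Let Φ be a finite set, p_h, p_l strictly positive pmfs on Φ, δ ∈ (0,1), and suppose real numbers ν_t, ν^l_t, Δ_t > 0, continuation utilities V_t(h), V_t(l) (indexed by signal histories) satisfy: (i) the low-type continuation is constant: V_{t}(l-branch) = ν^l_t · Σ_{τ=t}^T δ^{τ−t}; (ii) the binding incentive constraint V_t(l-branch) = ν_t + δ Σ_φ p_l(φ)[π_lh V_{t+1}(φ,h) + π_ll V_{t+1}(φ,l)] − Δ_t; (iii) continuation type-reward: V_{t+1}(φ,h) > V_{t+1}(φ,l) for all φ; (iv) martingale property ν_t = Σ_φ p_h(φ)[π_hh ν_{t+1}(φ) + π_hl ν^l_{t+1}(φ)] and its implied identity ν_t · Σ_{τ=t}^T δ^{τ−t} = ν_t + δ Σ_φ p_h(φ)[π_hh V_{t+1}(φ,h) + π_hl V_{t+1}(φ,l)]; and (v) p_l weighting versus p_h weighting: Σ_φ p_l(φ)[π_lh V_{t+1}(φ,h)+π_ll V_{t+1}(φ,l)]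 ≤ Σ_φ p_h(φ)[π_lh V_{t+1}(φ,h)+π_ll V_{t+1}(φ,l)] with persistence π_hh > π_lh. Then ν^l_t < ν_t. -/
open Finset

section

variable {R : Type*} [CommRing R] [LinearOrder R] [IsStrictOrderedRing R]

lemma mul_add_mul_le_mul_add_mul_of_le {a b c d x y : R} (hab : a + b = 1) (hcd : c + d = 1)
    (hca : c ≤ a) (hyx : y ≤ x) : c * x + d * y ≤ a * x + b * y := by
  have hgap : a * x + b * y - (c * x + d * y) = (a - c) * (x - y) := by
    linear_combination y * hab - y * hcd
  linarith [mul_nonneg (sub_nonneg.2 hca) (sub_nonneg.2 hyx)]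

lemma sum_Icc_pow_sub_pos {δ : R} (hδ : 0 < δ) {t T : ℕ} (htT : t ≤ T) :
    0 < ∑ τ ∈ Icc t T, δ ^ (τ - t) :=
  sum_pos (fun _ _ => pow_pos hδ _) ⟨t, mem_Icc.2 ⟨le_rfl, htT⟩⟩

end

theorem low_flow_below_high_flow_general
    {Φ : Type*} [Fintype Φ]
    (ph pl : Φ → ℝ)
    (hph : ∀ φ, 0 < ph φ)
    (δ : ℝ) (hδ : δ ∈ Set.Ioo (0 : ℝ) 1)
    (t T : ℕ) (htT : t ≤ T)
    (πhh πhl πlh πll : ℝ)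
    (hsumh : πhh + πhl = 1) (hsuml : πlh + πll = 1)
    (hpers : πlh < πhh)
    (νt νlt Δt : ℝ) (hΔt : 0 < Δt)
    (Vl : ℝ) (Vh1 Vl1 : Φ → ℝ)
    -- (i) low-branch continuation is a constant flow:
    (hi : Vl = νlt * ∑ τ ∈ Finset.Icc t T, δ ^ (τ - t))
    -- (ii) binding period-t incentive constraint:
    (hii : Vl = νt + δ * (∑ φ, pl φ * (πlh * Vh1 φ + πll * Vl1 φ)) - Δt)
    -- (iii) continuation type reward (CTM):
    (hiii : ∀ φ, Vl1 φ < Vh1 φ)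
    -- (iv) martingale property of flow utilities and its implied identity:
    (hiv2 : νt * ∑ τ ∈ Finset.Icc t T, δ ^ (τ - t) =
      νt + δ * (∑ φ, ph φ * (πhh * Vh1 φ + πhl * Vl1 φ)))
    -- (v) signal monotonicity (CSM):
    (hv : (∑ φ, pl φ * (πlh * Vh1 φ + πll * Vl1 φ)) ≤
      ∑ φ, ph φ * (πlh * Vh1 φ + πll * Vl1 φ)) :
    νlt < νt := by
  have hlow_le_high : ∑ φ, ph φ * (πlh * Vh1 φ + πll * Vl1 φ) ≤
      ∑ φ, ph φ * (πhh * Vh1 φ + πhl * Vl1 φ) := by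
    refine sum_le_sum fun φ _ => mul_le_mul_of_nonneg_left ?_ (hph φ).le
    exact mul_add_mul_le_mul_add_mul_of_le hsumh hsuml hpers.le (hiii φ).le
  have hdiscount_pos := sum_Icc_pow_sub_pos hδ.1 htT
  refine lt_of_mul_lt_mul_right ?_ hdiscount_pos.le
  calc νlt * ∑ τ ∈ Icc t T, δ ^ (τ - t)
      = νt + δ * ∑ φ, pl φ * (πlh * Vh1 φ + πll * Vl1 φ) - Δt := hi.symm.trans hii
    _ < νt + δ * ∑ φ, ph φ * (πhh * Vh1 φ + πhl * Vl1 φ) := by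
        have := mul_le_mul_of_nonneg_left (hv.trans hlow_le_high) hδ.1.le
        linarith
    _ = νt * ∑ τ ∈ Icc t T, δ ^ (τ - t) := hiv2.symm

/-- Key inequality in the proof of Proposition 5 (quadratic-cost case): the
flow utility after a first low-type announcement in period `t` is strictly
below the flow utility after another high-type realization. -/
theorem low_flow_below_high_flow
    {Φ : Type*} [Fintype Φ] [Nonempty Φ]
    (ph pl : Φ → ℝ)
    (hph : ∀ φ, 0 < ph φ) (hpl : ∀ φ, 0 < pl φ)
    (hs1 : ∑ φ, ph φ = 1) (hs2 : ∑ φ, pl φ = 1)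
    (δ : ℝ) (hδ : δ ∈ Set.Ioo (0 : ℝ) 1)
    (t T : ℕ) (ht : 1 ≤ t) (htT : t ≤ T)
    (πhh πhl πlh πll : ℝ)
    (hπ : 0 ≤ πlh ∧ 0 ≤ πll ∧ 0 ≤ πhh ∧ 0 ≤ πhl)
    (hsumh : πhh + πhl = 1) (hsuml : πlh + πll = 1)
    (hpers : πlh < πhh)
    (νt νlt Δt : ℝ) (hΔt : 0 < Δt)
    (Vl : ℝ) (Vh1 Vl1 νt1 νlt1 : Φ → ℝ)
    -- (i) low-branch continuation is a constant flow:
    (hi : Vl = νlt * ∑ τ ∈ Finset.Icc t T, δ ^ (τ - t))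
    -- (ii) binding period-t incentive constraint:
    (hii : Vl = νt + δ * (∑ φ, pl φ * (πlh * Vh1 φ + πll * Vl1 φ)) - Δt)
    -- (iii) continuation type reward (CTM):
    (hiii : ∀ φ, Vl1 φ < Vh1 φ)
    -- (iv) martingale property of flow utilities and its implied identity:
    (hiv1 : νt = ∑ φ, ph φ * (πhh * νt1 φ + πhl * νlt1 φ))
    (hiv2 : νt * ∑ τ ∈ Finset.Icc t T, δ ^ (τ - t) =
      νt + δ * (∑ φ, ph φ * (πhh * Vh1 φ + πhl * Vl1 φ)))
    -- (v) signal monotonicity (CSM):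
    (hv : (∑ φ, pl φ * (πlh * Vh1 φ + πll * Vl1 φ)) ≤
      ∑ φ, ph φ * (πlh * Vh1 φ + πll * Vl1 φ)) :
    νlt < νt :=
  low_flow_below_high_flow_general ph pl hph δ hδ t T htT πhh πhl πlh πll hsumh hsuml hpers νt νlt
    Δt hΔt Vl Vh1 Vl1 hi hii hiii hiv2 hv
end
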